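/- Let A be an associative unital ℂ-algebra, q ∈ ℂ nonzero with q² ≠ 1, z ∈ ℂ nonzero, and u, v ∈ A invertible with u·v = q²·v·u. Define K = z·u⁻¹, E = (q − q⁻¹)⁻¹·v⁻¹·(1 − u⁻¹), F = q(q − q⁻¹)⁻¹·v·(z·1 − z⁻¹·u). Then K is invertible with K⁻¹ = z⁻¹·u, and the quantum group relations hold: K·E = q²·E·K, K·F = q⁻²·F·K, and E·F − F·E = (q − q⁻¹)⁻¹·(K − K⁻¹). (Free field realization of U_q(sl(2)) in the quantum torus.) -/

import Mathlib

/-!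
Conjugation by `u⁻¹` rescales `v` by `q⁻²` and `v⁻¹` by `q²` while fixing every polynomial
in `u`; this gives the relations of `K = z u⁻¹` with `E` and `F`. Conjugation by `v` rescales
`u` by `q⁻²`, so the commutator `[v⁻¹(1 - u⁻¹), v(z - z⁻¹u)]` collapses to
`(1 - q⁻²)(K - K')`, and the prefactor `(q - q⁻¹)⁻² q (1 - q⁻²) = (q - q⁻¹)⁻¹` holds even
when `q - q⁻¹ = 0`, both sides being `0` then.
-/

def QCommute {k A : Type*} [SMul k A] [Mul A] (t : k) (a b : A) : Prop :=
  a * b = t • (b * a)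

namespace QCommute

section Semiring

variable {k A : Type*} [CommSemiring k] [Semiring A] [Algebra k A] {t : k} {a b : A}

theorem mul_right {w : A} (h : QCommute t a b) (hw : Commute a w) : QCommute t a (b * w) := by
  rw [QCommute, ← mul_assoc, h, smul_mul_assoc, mul_assoc, hw.eq, mul_assoc]

theorem smul (h : QCommute t a b) (r s : k) : QCommute t (r • a) (s • b) := by
  rw [QCommute, smul_mul_smul_comm, h, smul_mul_smul_comm, smul_comm, mul_comm s]

variable {u v : Aˣ}

theorem units_inv_left_swap (h : QCommute t (u : A) v) : QCommute t (v : A) ↑u⁻¹ := by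
  have := congrArg (fun x => (↑u⁻¹ : A) * x * ↑u⁻¹) h
  simpa [QCommute, mul_assoc] using this

theorem units_inv_right_swap (h : QCommute t (u : A) v) : QCommute t (↑v⁻¹ : A) u := by
  have := congrArg (fun x => (↑v⁻¹ : A) * x * ↑v⁻¹) h
  simpa [QCommute, mul_assoc] using this

theorem units_inv (h : QCommute t (u : A) v) : QCommute t (↑u⁻¹ : A) ↑v⁻¹ :=
  h.units_inv_left_swap.units_inv_left_swap

end Semiring

theorem symm {k A : Type*} [Semifield k] [Semiring A] [Algebra k A] {t : k} {a b : A}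
    (h : QCommute t a b) (ht : t ≠ 0) : QCommute t⁻¹ b a := by
  rw [QCommute, h, smul_smul, inv_mul_cancel₀ ht, one_smul]

end QCommute

theorem QCommute.free_field_commutator {k A : Type*} [Field k] [Ring A] [Algebra k A]
    {t : k} {u v : Aˣ} (h : QCommute t (u : A) v) (ht : t ≠ 0) (z : k) :
    (↑v⁻¹ * (1 - ↑u⁻¹)) * (↑v * (z • 1 - z⁻¹ • ↑u)) -
        (↑v * (z • 1 - z⁻¹ • ↑u)) * (↑v⁻¹ * (1 - ↑u⁻¹)) =
      (1 - t⁻¹) • (z • (↑u⁻¹ : A) - z⁻¹ • ↑u) := by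
  have h₁ : (↑u⁻¹ : A) * v = t⁻¹ • (v * ↑u⁻¹) := h.units_inv_left_swap.symm ht
  have h₂ : (u : A) * ↑v⁻¹ = t⁻¹ • (↑v⁻¹ * u) := h.units_inv_right_swap.symm ht
  have hv : ∀ w : A, ↑u⁻¹ * (↑v * w) = t⁻¹ • (↑v * (↑u⁻¹ * w)) := fun w => by
    rw [← mul_assoc, h₁, smul_mul_assoc, mul_assoc]
  have hv' : ∀ w : A, ↑u * (↑v⁻¹ * w) = t⁻¹ • (↑v⁻¹ * (↑u * w)) := fun w => by
    rw [← mul_assoc, h₂, smul_mul_assoc, mul_assoc]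
  simp only [mul_sub, sub_mul, mul_one, one_mul, smul_sub, smul_smul, mul_smul_comm,
    smul_mul_assoc, mul_assoc, hv, hv', h₁, h₂, Units.mul_inv_cancel_left,
    Units.inv_mul_cancel_left, Units.mul_inv, Units.inv_mul]
  match_scalars <;> ring

theorem free_field_realization_uqsl2
    (A : Type*) [Ring A] [Algebra ℂ A]
    (q z : ℂ) (hq : q ≠ 0) (hz : z ≠ 0)
    (u v : Aˣ) (huv : (u : A) * (v : A) = q ^ 2 • ((v : A) * (u : A))) :
    let K : A := z • (↑u⁻¹ : A)
    let K' : A := z⁻¹ • (u : A)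
    let E : A := (q - q⁻¹)⁻¹ • ((↑v⁻¹ : A) * (1 - (↑u⁻¹ : A)))
    let F : A := (q * (q - q⁻¹)⁻¹) • ((v : A) * (z • (1 : A) - z⁻¹ • (u : A)))
    (K * K' = 1 ∧ K' * K = 1) ∧
      K * E = q ^ 2 • (E * K) ∧
      K * F = (q⁻¹) ^ 2 • (F * K) ∧
      E * F - F * E = (q - q⁻¹)⁻¹ • (K - K') := by
  intro K K' E F
  have h : QCommute (q ^ 2) (u : A) v := huv
  have hq2 : q ^ 2 ≠ 0 := pow_ne_zero 2 hq
  have hu : Commute (↑u⁻¹ : A) u := (Commute.refl _).units_inv_left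
  refine ⟨⟨by simp [K, K', hz], by simp [K, K', hz]⟩, ?_, ?_, ?_⟩
  · exact (h.units_inv.mul_right ((Commute.one_right _).sub_right (Commute.refl _))).smul z _
  · rw [inv_pow]
    exact ((h.units_inv_left_swap.symm hq2).mul_right
      (((Commute.one_right _).smul_right z).sub_right (hu.smul_right _))).smul z _
  · have hscalar :
        (q - q⁻¹)⁻¹ * (q * (q - q⁻¹)⁻¹) * (1 - (q ^ 2)⁻¹) = (q - q⁻¹)⁻¹ := by
      have hq_mul : q * (1 - (q ^ 2)⁻¹) = q - q⁻¹ := by field_simp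
      calc _ = (q - q⁻¹)⁻¹ * (q - q⁻¹)⁻¹⁻¹ * (q - q⁻¹)⁻¹ := by
            rw [inv_inv, ← hq_mul]; ring
        _ = _ := mul_inv_mul_cancel _
    calc E * F - F * E
        = ((q - q⁻¹)⁻¹ * (q * (q - q⁻¹)⁻¹)) •
            ((↑v⁻¹ * (1 - ↑u⁻¹)) * (↑v * (z • 1 - z⁻¹ • ↑u)) -
              (↑v * (z • 1 - z⁻¹ • ↑u)) * (↑v⁻¹ * (1 - ↑u⁻¹))) := by
          simp only [E, F, smul_mul_smul_comm, smul_sub, mul_comm (q * (q - q⁻¹)⁻¹)]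
      _ = (q - q⁻¹)⁻¹ • (K - K') := by
          rw [h.free_field_commutator hq2, smul_smul, hscalar]
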